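/- arXiv:2512.17458 — 4 statements merged into one kernel-verified Lean document; each statement's English description precedes it below -/
import Mathlib

section
/- Let n ≥ 1, let q be a nonzero complex number that is not a root of unity, let a be an integer with |a| ≥ n, and let t = q^{2a}, t = −q^{2a}, t = q^{2a−1}, or t = −q^{2a−1}. If λ and μ are Young diagrams each with at most n cells and W(λ,q,t) = W(μ,q,t), then λ = μ. -/
noncomputable section

/-- The content of a cell `(i, j)` of a Young diagram: `j - i`. -/
def cellContent (c : ℕ × ℕ) : ℤ := (c.2 : ℤ) - (c.1 : ℤ)

/-- `diagCount lam d` is `m_λ(d)`, the number of cells of `lam` of content `d`. -/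
def diagCount (lam : YoungDiagram) (d : ℤ) : ℕ :=
  (lam.cells.filter (fun c => cellContent c = d)).card

/-- The rational function
`W(λ,q,t) = ∏_{c∈λ}(1 − t⁻¹q^{−2·ct(c)}T) / ∏_{c∈λ}(1 − t·q^{2·ct(c)}T) ∈ RatFunc ℂ`. -/
def WFun (q t : ℂˣ) (lam : YoungDiagram) : RatFunc ℂ :=
  (∏ c ∈ lam.cells,
      (1 - RatFunc.C ((t : ℂ)⁻¹ * (q : ℂ) ^ (-2 * cellContent c)) * RatFunc.X)) /
  (∏ c ∈ lam.cells,
      (1 - RatFunc.C ((t : ℂ) * (q : ℂ) ^ (2 * cellContent c)) * RatFunc.X))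

/-!
Write `u d = t q^{2d}`, so that
`W(λ) = ∏_{c∈λ} (1 - u(ct c)⁻¹ T) / ∏_{c∈λ} (1 - u(ct c) T)`.
The poles of `W(λ)` are the points `u(d)⁻¹`, of multiplicity the number `m_λ(d)` of cells of
content `d`, unless a zero `u(e)` of the numerator cancels them. A diagram with at most `n` cells
has all contents in `(-n, n)`, and for such `d, e` the equation `u(d) u(e) = 1` reads
`q^{s + 2(d+e)} = 1` with `t² = q^s`, `s ∈ {4a, 4a - 2}`; this is impossible since `q` is not a
root of unity and `|s| > 2|d + e|`. Hence `W(λ)` determines every `m_λ(d)`. These determine `λ`: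
the cells of content `d` form an initial segment of their diagonal, so `(i, j) ∈ λ` if and only
if `min i j < m_λ(j - i)`.
-/

namespace YoungDiagram

def contents (μ : YoungDiagram) : Multiset ℤ := μ.cells.val.map cellContent

/-- The `k`-th cell, counted from the boundary of the quadrant, on the diagonal of content `d`. -/
def diagCell (d : ℤ) (k : ℕ) : ℕ × ℕ := (k + (-d).toNat, k + d.toNat)

theorem diagCell_injective (d : ℤ) : Function.Injective (diagCell d) := by
  intro k l h
  simp only [diagCell, Prod.mk.injEq] at h
  omega

theorem diagCell_cellContent_min (c : ℕ × ℕ) : diagCell (cellContent c) (min c.1 c.2) = c := by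
  obtain ⟨i, j⟩ := c
  simp only [diagCell, cellContent, Prod.mk.injEq]
  omega

theorem exists_diagCell_mem_iff_lt (μ : YoungDiagram) (d : ℤ) :
    ∃ L, ∀ k, diagCell d k ∈ μ ↔ k < L := by
  have hlower : IsLowerSet {k | diagCell d k ∈ μ} := fun k l hlk hk =>
    μ.up_left_mem (Nat.add_le_add_right hlk _) (Nat.add_le_add_right hlk _) hk
  have hfinite : {k | diagCell d k ∈ μ}.Finite :=
    μ.cells.finite_toSet.preimage (diagCell_injective d).injOn
  obtain h | ⟨L, hL⟩ := hlower.eq_univ_or_Iio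
  · exact absurd (h ▸ hfinite) Set.infinite_univ
  · exact ⟨L, fun k => Set.ext_iff.mp hL k⟩

theorem diagCell_mem_iff_lt_diagCount (μ : YoungDiagram) (d : ℤ) (k : ℕ) :
    diagCell d k ∈ μ ↔ k < diagCount μ d := by
  obtain ⟨L, hL⟩ := μ.exists_diagCell_mem_iff_lt d
  suffices μ.cells.filter (fun c => cellContent c = d) =
      (Finset.range L).map ⟨diagCell d, diagCell_injective d⟩ by
    rw [diagCount, this, Finset.card_map, Finset.card_range, hL]
  ext c
  simp only [Finset.mem_filter, mem_cells, Finset.mem_map, Finset.mem_range,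
    Function.Embedding.coeFn_mk, ← hL]
  constructor
  · rintro ⟨hc, rfl⟩
    exact ⟨_, (diagCell_cellContent_min c).symm ▸ hc, diagCell_cellContent_min c⟩
  · rintro ⟨k, hk, rfl⟩
    refine ⟨hk, ?_⟩
    simp only [cellContent, diagCell]
    omega

theorem mem_iff_min_lt_diagCount (μ : YoungDiagram) (c : ℕ × ℕ) :
    c ∈ μ ↔ min c.1 c.2 < diagCount μ (cellContent c) := by
  conv_lhs => rw [← diagCell_cellContent_min c]
  exact μ.diagCell_mem_iff_lt_diagCount _ _

theorem count_contents (μ : YoungDiagram) (d : ℤ) : μ.contents.count d = diagCount μ d := by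
  simp only [contents, Multiset.count_map, diagCount, Finset.card, Finset.filter_val, eq_comm]

theorem contents_injective : Function.Injective contents := by
  intro μ ν h
  ext c
  simp only [mem_cells, mem_iff_min_lt_diagCount, ← count_contents, h]

theorem abs_lt_card_of_mem_contents {μ : YoungDiagram} {d : ℤ} (hd : d ∈ μ.contents) :
    |d| < μ.card := by
  obtain ⟨⟨i, j⟩, hc, rfl⟩ := Multiset.mem_map.mp hd
  have hc : (i, j) ∈ μ := hc
  have hi : i < μ.card := (mem_iff_lt_colLen.mp hc).trans_le
    ((colLen_eq_card μ).trans_le (Finset.card_le_card (Finset.filter_subset _ _)))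
  have hj : j < μ.card := (mem_iff_lt_rowLen.mp hc).trans_le
    ((rowLen_eq_card μ).trans_le (Finset.card_le_card (Finset.filter_subset _ _)))
  rw [cellContent, abs_lt]
  omega

end YoungDiagram

theorem Multiset.eq_of_add_eq_add_of_separating {α : Type*} {p : α → Prop} [DecidablePred p]
    {s s' t t' : Multiset α} (hs : ∀ a ∈ s, ¬p a) (hs' : ∀ a ∈ s', ¬p a)
    (ht : ∀ a ∈ t, p a) (ht' : ∀ a ∈ t', p a) (h : s + t = s' + t') : t = t' := by
  have h := congrArg (Multiset.filter p) h
  rwa [Multiset.filter_add, Multiset.filter_add, Multiset.filter_eq_nil.mpr hs,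
    Multiset.filter_eq_nil.mpr hs', Multiset.filter_eq_self.mpr ht,
    Multiset.filter_eq_self.mpr ht', zero_add, zero_add] at h

open Polynomial

theorem Polynomial.one_sub_C_mul_X_ne_zero {R : Type*} [CommRing R] [Nontrivial R] (b : R) :
    1 - C b * X ≠ 0 := fun h => by
  simpa using congrArg (coeff · 0) h

theorem Polynomial.roots_one_sub_C_mul_X {K : Type*} [Field K] (b : Kˣ) :
    (1 - C (b : K) * X).roots = {((b⁻¹ : Kˣ) : K)} := by
  rw [← neg_sub, roots_neg, ← C_1, roots_C_mul_X_sub_C_of_IsUnit, mul_one]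

theorem Polynomial.roots_multiset_prod_one_sub_C_mul_X {K : Type*} [Field K] (s : Multiset Kˣ) :
    (s.map fun b : Kˣ => 1 - C (b : K) * X).prod.roots = s.map fun b => ((b⁻¹ : Kˣ) : K) := by
  rw [roots_multiset_prod, Multiset.bind_map]
  · simp only [roots_one_sub_C_mul_X, Multiset.bind_singleton]
  · rw [Multiset.mem_map]
    rintro ⟨b, -, hb⟩
    exact one_sub_C_mul_X_ne_zero _ hb

section ContentRatio

variable {K : Type*} [Field K]

def contentPoly (u : ℤ → Kˣ) (μ : YoungDiagram) : K[X] :=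
  (μ.contents.map fun d => 1 - C (u d : K) * X).prod

def contentRatio (u : ℤ → Kˣ) (μ : YoungDiagram) : RatFunc K :=
  algebraMap K[X] (RatFunc K) (contentPoly u⁻¹ μ) /
    algebraMap K[X] (RatFunc K) (contentPoly u μ)

theorem roots_contentPoly (u : ℤ → Kˣ) (μ : YoungDiagram) :
    (contentPoly u μ).roots = μ.contents.map fun d => (((u d)⁻¹ : Kˣ) : K) := by
  simpa only [contentPoly, Multiset.map_map, Function.comp_def] using
    roots_multiset_prod_one_sub_C_mul_X (μ.contents.map u)

theorem contentPoly_ne_zero (u : ℤ → Kˣ) (μ : YoungDiagram) : contentPoly u μ ≠ 0 :=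
  Multiset.prod_ne_zero <| by
    rw [Multiset.mem_map]
    rintro ⟨d, -, hd⟩
    exact one_sub_C_mul_X_ne_zero _ hd

theorem eq_of_contentRatio_eq {u : ℤ → Kˣ} (hu : Function.Injective u) {S : Set ℤ}
    (hS : ∀ d ∈ S, ∀ e ∈ S, u d * u e ≠ 1) {μ ν : YoungDiagram}
    (hμ : ∀ d ∈ μ.contents, d ∈ S) (hν : ∀ d ∈ ν.contents, d ∈ S)
    (h : contentRatio u μ = contentRatio u ν) : μ = ν := by
  classical
  have hpoly :
      contentPoly u⁻¹ μ * contentPoly u ν = contentPoly u⁻¹ ν * contentPoly u μ := by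
    rw [contentRatio, contentRatio, div_eq_div_iff (RatFunc.algebraMap_ne_zero
      (contentPoly_ne_zero _ _)) (RatFunc.algebraMap_ne_zero (contentPoly_ne_zero _ _)),
      ← map_mul, ← map_mul] at h
    exact RatFunc.algebraMap_injective K h
  have hroots := congrArg roots hpoly
  simp only [roots_mul (mul_ne_zero (contentPoly_ne_zero _ _) (contentPoly_ne_zero _ _)),
    roots_contentPoly, Pi.inv_apply, inv_inv] at hroots
  -- `p` singles out the possible poles; by `hS` no zero of a numerator is among them
  let p : K → Prop := fun x => ∃ e ∈ S, x = ((u e)⁻¹ : Kˣ)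
  have hnum : ∀ ρ : YoungDiagram, (∀ d ∈ ρ.contents, d ∈ S) →
      ∀ x ∈ ρ.contents.map fun d => (u d : K), ¬p x := by
    rintro ρ hρ _ hx ⟨e, he, hde⟩
    obtain ⟨d, hd, rfl⟩ := Multiset.mem_map.mp hx
    exact hS d (hρ d hd) e he (eq_inv_iff_mul_eq_one.mp (Units.ext hde))
  have hden : ∀ ρ : YoungDiagram, (∀ d ∈ ρ.contents, d ∈ S) →
      ∀ x ∈ ρ.contents.map fun d => (((u d)⁻¹ : Kˣ) : K), p x := by
    intro ρ hρ _ hx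
    obtain ⟨d, hd, rfl⟩ := Multiset.mem_map.mp hx
    exact ⟨d, hρ d hd, rfl⟩
  have hsep := Multiset.eq_of_add_eq_add_of_separating
    (hnum μ hμ) (hnum ν hν) (hden ν hν) (hden μ hμ) hroots
  exact YoungDiagram.contents_injective
    (Multiset.map_injective (Units.val_injective.comp (inv_injective.comp hu)) hsep).symm

end ContentRatio

theorem WFun_eq_contentRatio (q t : ℂˣ) (μ : YoungDiagram) :
    WFun q t μ = contentRatio (fun d => t * q ^ (2 * d)) μ := by
  rw [WFun, contentRatio, contentPoly, contentPoly, map_multiset_prod, map_multiset_prod,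
    YoungDiagram.contents, Multiset.map_map, Multiset.map_map, Multiset.map_map, Multiset.map_map]
  congr 3 <;> funext c <;> simp [zpow_neg, mul_comm]

theorem Units.exists_sq_eq_zpow {R : Type*} [Ring R] {q t : Rˣ} {a : ℤ}
    (ht : t = q ^ (2 * a) ∨ t = -(q ^ (2 * a)) ∨
          t = q ^ (2 * a - 1) ∨ t = -(q ^ (2 * a - 1))) :
    ∃ s : ℤ, t ^ 2 = q ^ s ∧ (s = 4 * a ∨ s = 4 * a - 2) := by
  rcases ht with rfl | rfl | rfl | rfl
  · exact ⟨4 * a, by rw [sq, ← zpow_add]; ring_nf, Or.inl rfl⟩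
  · exact ⟨4 * a, by rw [neg_sq, sq, ← zpow_add]; ring_nf, Or.inl rfl⟩
  · exact ⟨4 * a - 2, by rw [sq, ← zpow_add]; ring_nf, Or.inr rfl⟩
  · exact ⟨4 * a - 2, by rw [neg_sq, sq, ← zpow_add]; ring_nf, Or.inr rfl⟩

theorem WFun_injective_high_powers_general
    (n : ℕ)
    (q t : ℂˣ)
    (hq : ∀ k : ℕ, 0 < k → q ^ k ≠ 1)
    (a : ℤ) (ha : (n : ℤ) ≤ |a|)
    (ht : t = q ^ (2 * a) ∨ t = -(q ^ (2 * a)) ∨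
          t = q ^ (2 * a - 1) ∨ t = -(q ^ (2 * a - 1))) :
    ∀ lam mu : YoungDiagram, lam.card ≤ n → mu.card ≤ n →
      WFun q t lam = WFun q t mu → lam = mu := by
  intro lam mu hlam hmu hW
  have hzpow : Function.Injective (q ^ · : ℤ → ℂˣ) :=
    injective_zpow_iff_not_isOfFinOrder.mpr fun hfin =>
      let ⟨k, hk, hqk⟩ := isOfFinOrder_iff_pow_eq_one.mp hfin
      hq k hk hqk
  obtain ⟨s, hts, hs⟩ := Units.exists_sq_eq_zpow ht
  have hcontents (ρ : YoungDiagram) (hρ : ρ.card ≤ n) :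
      ∀ d ∈ ρ.contents, d ∈ Set.Ioo (-(n : ℤ)) n := fun d hd =>
    abs_lt.mp ((YoungDiagram.abs_lt_card_of_mem_contents hd).trans_le (by exact_mod_cast hρ))
  rw [WFun_eq_contentRatio, WFun_eq_contentRatio] at hW
  refine eq_of_contentRatio_eq ?_ ?_ (hcontents lam hlam) (hcontents mu hmu) hW
  · intro d e hde
    have := hzpow (mul_left_cancel hde)
    omega
  · rintro d ⟨hd₁, hd₂⟩ e ⟨he₁, he₂⟩ hde
    have hsde : q ^ (s + 2 * d + 2 * e) = q ^ (0 : ℤ) := by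
      rw [zpow_zero, ← hde, zpow_add, zpow_add, ← hts, sq]
      ac_rfl
    have := hzpow hsde
    have := le_abs.mp ha
    omega

/-- If `q` is not a root of unity, `|a| ≥ n`, and `t` is one of
`±q^(2a), ±q^(2a−1)`, then `λ ↦ W(λ,q,t)` is injective on Young diagrams with at most
`n` cells. -/
theorem WFun_injective_high_powers
    (n : ℕ) (hn : 1 ≤ n)
    (q t : ℂˣ)
    (hq : ∀ k : ℕ, 0 < k → q ^ k ≠ 1)
    (a : ℤ) (ha : (n : ℤ) ≤ |a|)
    (ht : t = q ^ (2 * a) ∨ t = -(q ^ (2 * a)) ∨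
          t = q ^ (2 * a - 1) ∨ t = -(q ^ (2 * a - 1))) :
    ∀ lam mu : YoungDiagram, lam.card ≤ n → mu.card ≤ n →
      WFun q t lam = WFun q t mu → lam = mu :=
  WFun_injective_high_powers_general n q t hq a ha ht
end
end

section
/- Let n ≥ 3, let a be an integer with 2 ≤ a ≤ n − 1, let q be a nonzero complex number, and set t = q^{2a−1}. Then the Young diagrams of the hook partitions (n−a, 1^a) (of n) and (n−a, 1^{a−2}) (of n−2) satisfy W((n−a,1^a), q, t) = W((n−a,1^{a−2}), q, t). In particular, for small odd powers t = q^{2a−1} the function λ ↦ W(λ,q,t) does not separate these two distinct partitions. -/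
noncomputable section

/-- A hook row-length list `m :: (1, …, 1)` with `m ≥ 1` is sorted decreasingly. -/
lemma sorted_hook (m k : ℕ) (hm : 1 ≤ m) :
    List.SortedGE (m :: List.replicate k 1) := by
  rw [List.sortedGE_iff_pairwise]
  have hrep : List.Pairwise (· ≥ ·) (List.replicate k 1) := by
    induction k with
    | zero => simp
    | succ k ih =>
      rw [List.replicate_succ]
      refine List.pairwise_cons.mpr ⟨?_, ih⟩
      intro b hb
      rw [List.eq_of_mem_replicate hb]
  refine List.pairwise_cons.mpr ⟨?_, hrep⟩
  intro b hb
  rw [List.eq_of_mem_replicate hb]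
  exact hm

/- The two cells added to the leg of the hook `(n − a, 1^(a−2))` have contents `1 − a` and `−a`.
`W` is a product over the cells of factors `(1 − t⁻¹q^{−2d}T) / (1 − tq^{2d}T)`, `d` the content,
and the numerator of the factor for content `x` is the denominator of the factor for content `y`,
and vice versa, as soon as `(t q^{x+y})² = 1`. For `t = q^{2a−1}` the factors of the two new
cells therefore cancel. -/

def hookDiagram (m k : ℕ) (hm : 1 ≤ m) : YoungDiagram :=
  YoungDiagram.ofRowLens (m :: List.replicate k 1) (sorted_hook m k hm)

section Hook

variable {m k : ℕ} {hm : 1 ≤ m}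

lemma mem_hookDiagram {c : ℕ × ℕ} :
    c ∈ hookDiagram m k hm ↔ (c.1 = 0 ∧ c.2 < m) ∨ (0 < c.1 ∧ c.1 ≤ k ∧ c.2 = 0) := by
  rw [hookDiagram, YoungDiagram.mem_ofRowLens]
  rcases c with ⟨_ | i, j⟩
  · simp
  · simp only [List.length_cons, List.length_replicate, List.getElem_cons_succ,
      List.getElem_replicate]
    exact ⟨fun ⟨_, _⟩ => by omega, fun _ => ⟨by omega, by omega⟩⟩

lemma add_one_zero_notMem_hookDiagram : (k + 1, 0) ∉ hookDiagram m k hm := by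
  simp [mem_hookDiagram]

lemma cells_hookDiagram_add_one :
    (hookDiagram m (k + 1) hm).cells = insert (k + 1, 0) (hookDiagram m k hm).cells := by
  ext ⟨i, j⟩
  simp only [Finset.mem_insert, YoungDiagram.mem_cells, mem_hookDiagram, Prod.mk.injEq]
  omega

end Hook

lemma RatFunc.one_sub_C_mul_X_ne_zero {K : Type*} [Field K] (c : K) :
    (1 : RatFunc K) - RatFunc.C c * RatFunc.X ≠ 0 := by
  have h : (1 : RatFunc K) - RatFunc.C c * RatFunc.X
      = algebraMap (Polynomial K) (RatFunc K) (1 - Polynomial.C c * Polynomial.X) := by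
    simp [RatFunc.algebraMap_C, RatFunc.algebraMap_X]
  rw [h]
  refine RatFunc.algebraMap_ne_zero fun hz => ?_
  simpa using congrArg (Polynomial.coeff · 0) hz

lemma inv_mul_zpow_neg_eq_mul_zpow_of_sq_eq_one {K : Type*} [Field K] {t q : K}
    (ht : t ≠ 0) (hq : q ≠ 0) {x y : ℤ} (h : (t * q ^ (x + y)) ^ 2 = 1) :
    t⁻¹ * q ^ (-2 * x) = t * q ^ (2 * y) := by
  rw [zpow_add₀ hq] at h
  rw [neg_mul, zpow_neg, zpow_mul', zpow_mul', zpow_ofNat, zpow_ofNat]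
  have hqx : q ^ x ≠ 0 := zpow_ne_zero x hq
  field_simp
  linear_combination -h

def cellFactor (q t : ℂˣ) (d : ℤ) : RatFunc ℂ :=
  (1 - RatFunc.C ((t : ℂ)⁻¹ * (q : ℂ) ^ (-2 * d)) * RatFunc.X) /
    (1 - RatFunc.C ((t : ℂ) * (q : ℂ) ^ (2 * d)) * RatFunc.X)

lemma WFun_eq_prod_cellFactor (q t : ℂˣ) (lam : YoungDiagram) :
    WFun q t lam = ∏ c ∈ lam.cells, cellFactor q t (cellContent c) :=
  (Finset.prod_div_distrib _ _).symm

lemma cellFactor_mul_cellFactor_eq_one (q t : ℂˣ) {x y : ℤ}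
    (h : ((t : ℂ) * (q : ℂ) ^ (x + y)) ^ 2 = 1) :
    cellFactor q t x * cellFactor q t y = 1 := by
  have h' : ((t : ℂ) * (q : ℂ) ^ (y + x)) ^ 2 = 1 := by rwa [add_comm]
  rw [cellFactor, cellFactor,
    inv_mul_zpow_neg_eq_mul_zpow_of_sq_eq_one t.ne_zero q.ne_zero h,
    inv_mul_zpow_neg_eq_mul_zpow_of_sq_eq_one t.ne_zero q.ne_zero h', div_mul_div_comm,
    mul_comm, div_self (mul_ne_zero (RatFunc.one_sub_C_mul_X_ne_zero _)
      (RatFunc.one_sub_C_mul_X_ne_zero _))]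

/-- For `n ≥ 3`, `2 ≤ a ≤ n − 1` and `t = q^(2a−1)`, the hook
partitions `(n−a, 1^a)` and `(n−a, 1^(a−2))` have the same `W`-function, although they
are distinct. -/
theorem WFun_not_injective_small_odd_powers
    (n a : ℕ) (ha1 : 2 ≤ a) (ha2 : a ≤ n - 1)
    (q t : ℂˣ) (ht : t = q ^ (2 * a - 1)) :
    let lam := YoungDiagram.ofRowLens ((n - a) :: List.replicate a 1)
      (sorted_hook (n - a) a (by omega))
    let mu := YoungDiagram.ofRowLens ((n - a) :: List.replicate (a - 2) 1)
      (sorted_hook (n - a) (a - 2) (by omega))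
    WFun q t lam = WFun q t mu ∧ lam ≠ mu := by
  obtain ⟨k, rfl⟩ : ∃ k, a = k + 2 := ⟨a - 2, by omega⟩
  have hm : 1 ≤ n - (k + 2) := by omega
  change WFun q t (hookDiagram _ (k + 2) hm) = WFun q t (hookDiagram _ k hm) ∧
    hookDiagram _ (k + 2) hm ≠ hookDiagram _ k hm
  have hcancel : cellFactor q t (cellContent (k + 2, 0)) *
      cellFactor q t (cellContent (k + 1, 0)) = 1 := by
    refine cellFactor_mul_cellFactor_eq_one q t ?_
    have hsum : cellContent (k + 2, 0) + cellContent (k + 1, 0) =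
        -((2 * (k + 2) - 1 : ℕ) : ℤ) := by
      simp only [cellContent]
      omega
    rw [hsum, zpow_neg, zpow_natCast, ht, Units.val_pow_eq_pow_val,
      mul_inv_cancel₀ (pow_ne_zero _ q.ne_zero), one_pow]
  constructor
  · rw [WFun_eq_prod_cellFactor, WFun_eq_prod_cellFactor,
      cells_hookDiagram_add_one (k := k + 1), Finset.prod_insert add_one_zero_notMem_hookDiagram,
      cells_hookDiagram_add_one,
      Finset.prod_insert add_one_zero_notMem_hookDiagram, ← mul_assoc, hcancel, one_mul]
  · intro h
    have hcell : (k + 2, 0) ∈ hookDiagram (n - (k + 2)) (k + 2) hm := mem_hookDiagram.2 (by simp)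
    rw [h, mem_hookDiagram] at hcell
    omega
end
end

section
/- Let q, t be nonzero complex numbers with q not a root of unity, and let μ ⊆ λ be Young diagrams. For i ∈ ℤ let m_{λ/μ}(i) denote the number of cells of λ\μ of content i. Then W(λ,q,t) = W(μ,q,t) if and only if for every integer i with m_{λ/μ}(i) > 0 there exists an integer j with m_{λ/μ}(j) = m_{λ/μ}(i) and (t·q^{2i})·(t·q^{2j}) = 1 (i.e. every diagonal of λ/μ is (q,t)-paired with a diagonal of λ/μ of the same length). -/
/-!
Put `x i = t q^{2i}`. Since `μ ⊆ λ`, `W(λ) = W(μ) · W(λ/μ)`, so the claim is `W(λ/μ) = 1`, i.e.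
`∏ (1 - (x ct(c))⁻¹ T) = ∏ (1 - x ct(c) T)` over the cells of `λ/μ`. These polynomials have root
multisets `{x ct(c)}` and `{(x ct(c))⁻¹}`, so they agree iff the multiset `{x ct(c)}` is stable under
inversion. As `q` is not a root of unity, `i ↦ x i` is injective, and stability under inversion says
exactly that each diagonal `i` of `λ/μ` has a diagonal `j` of the same length with `x i * x j = 1`.
-/

noncomputable section

/-- `skewDiagCount lam mu d` is `m_{λ/μ}(d)`, the number of cells of `λ\μ` of content `d`. -/
def skewDiagCount (lam mu : YoungDiagram) (d : ℤ) : ℕ :=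
  ((lam.cells \ mu.cells).filter (fun c => cellContent c = d)).card

/-- The skew analogue `W(λ/μ,q,t)`, a product over the cells of `λ\μ`. -/
def WSkew (q t : ℂˣ) (lam mu : YoungDiagram) : RatFunc ℂ :=
  (∏ c ∈ lam.cells \ mu.cells,
      (1 - RatFunc.C ((t : ℂ)⁻¹ * (q : ℂ) ^ (-2 * cellContent c)) * RatFunc.X)) /
  (∏ c ∈ lam.cells \ mu.cells,
      (1 - RatFunc.C ((t : ℂ) * (q : ℂ) ^ (2 * cellContent c)) * RatFunc.X))

open Polynomial

namespace Polynomial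
variable {K : Type*} [Field K]

theorem roots_one_sub_C_mul_X_s17 (u : Kˣ) : (1 - C (u : K) * X).roots = {((u⁻¹ : Kˣ) : K)} := by
  rw [← roots_neg, neg_sub, ← C_1, roots_C_mul_X_sub_C_of_IsUnit, mul_one]

theorem one_sub_C_mul_X_ne_zero_s17 (a : K) : (1 - C a * X : K[X]) ≠ 0 := by
  intro h
  simpa using congrArg (coeff · 0) h

theorem roots_multiset_prod_one_sub_C_mul_X_s17 (s : Multiset Kˣ) :
    (s.map fun u : Kˣ => 1 - C (u : K) * X).prod.roots = s.map fun u => ((u⁻¹ : Kˣ) : K) := by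
  rw [roots_multiset_prod _ (by simp [one_sub_C_mul_X_ne_zero_s17])]
  simp only [Multiset.bind_map, roots_one_sub_C_mul_X_s17, Multiset.bind_singleton]

theorem multiset_prod_one_sub_C_mul_X_inj {s t : Multiset Kˣ} :
    (s.map fun u : Kˣ => 1 - C (u : K) * X).prod = (t.map fun u : Kˣ => 1 - C (u : K) * X).prod ↔
      s = t := by
  refine ⟨fun h => ?_, fun h => h ▸ rfl⟩
  have := congrArg roots h
  rw [roots_multiset_prod_one_sub_C_mul_X_s17, roots_multiset_prod_one_sub_C_mul_X_s17] at this
  exact Multiset.map_injective (Units.val_injective.comp inv_injective) this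

end Polynomial

namespace Multiset
variable {α G : Type*} [DecidableEq α] [DecidableEq G]

theorem map_inv_eq_self_iff [InvolutiveInv G] (M : Multiset G) :
    M.map (·⁻¹) = M ↔ ∀ z ∈ M, M.count z⁻¹ = M.count z := by
  have hcount (z : G) : (M.map (·⁻¹)).count z = M.count z⁻¹ := by
    rw [← inv_inv z, count_map_eq_count' _ _ inv_injective, inv_inv]
  refine ⟨fun h z _ => by rw [← hcount, h], fun h => ext.mpr fun z => ?_⟩
  rw [hcount]
  by_cases hz : z ∈ M
  · exact h z hz
  by_cases hz' : z⁻¹ ∈ M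
  · simpa using (h _ hz').symm
  · rw [count_eq_zero.mpr hz, count_eq_zero.mpr hz']

theorem map_inv_map_eq_map_iff [Group G] {f : α → G} (hf : Function.Injective f)
    (m : Multiset α) :
    (m.map f).map (·⁻¹) = m.map f ↔
      ∀ i, 0 < m.count i → ∃ j, m.count j = m.count i ∧ f i * f j = 1 := by
  simp only [map_inv_eq_self_iff, mem_map, forall_exists_index, and_imp, forall_apply_eq_imp_iff₂,
    count_map_eq_count' f m hf, count_pos, mul_eq_one_iff_eq_inv']
  refine forall₂_congr fun i hi => ⟨fun h => ?_, ?_⟩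
  · obtain ⟨j, -, hj⟩ := mem_map.mp <| count_pos.mp <| h ▸ count_pos.mpr hi
    exact ⟨j, by rw [← count_map_eq_count' f m hf, hj, h], hj⟩
  · rintro ⟨j, hj, hfj⟩
    rw [← hfj, count_map_eq_count' f m hf, hj]

end Multiset

namespace RatFunc
variable {K : Type*} [Field K]

theorem one_sub_C_mul_X_eq_algebraMap (a : K) :
    1 - C a * X = algebraMap K[X] (RatFunc K) (1 - Polynomial.C a * Polynomial.X) := by
  simp [algebraMap_C, algebraMap_X]

theorem one_sub_C_mul_X_ne_zero_s17 (a : K) : 1 - C a * X ≠ 0 := by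
  rw [one_sub_C_mul_X_eq_algebraMap]
  exact algebraMap_ne_zero (Polynomial.one_sub_C_mul_X_ne_zero_s17 a)

theorem prod_one_sub_C_mul_X {ι : Type*} (s : Finset ι) (g : ι → Kˣ) :
    ∏ c ∈ s, (1 - C (g c : K) * X) = algebraMap K[X] (RatFunc K)
      ((s.val.map g).map fun u : Kˣ => 1 - Polynomial.C (u : K) * Polynomial.X).prod := by
  rw [Multiset.map_map, ← Finset.prod_eq_multiset_prod, map_prod]
  simp only [Function.comp_apply, one_sub_C_mul_X_eq_algebraMap]

end RatFunc

def diagWeight {G : Type*} [Group G] (q t : G) (i : ℤ) : G := t * q ^ (2 * i)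

theorem diagWeight_injective {G : Type*} [Group G] {q : G} (hq : ¬IsOfFinOrder q) (t : G) :
    Function.Injective (diagWeight q t) :=
  (mul_right_injective t).comp <|
    (injective_zpow_iff_not_isOfFinOrder.mpr hq).comp (mul_right_injective₀ two_ne_zero)

def skewContents (lam mu : YoungDiagram) : Multiset ℤ :=
  (lam.cells \ mu.cells).val.map cellContent

theorem count_skewContents (lam mu : YoungDiagram) (d : ℤ) :
    (skewContents lam mu).count d = skewDiagCount lam mu d := by
  simp [skewContents, skewDiagCount, Multiset.count_map, Finset.card_def, eq_comm]

theorem WFun_eq_mul_WSkew (q t : ℂˣ) {mu lam : YoungDiagram} (h : mu ≤ lam) :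
    WFun q t lam = WFun q t mu * WSkew q t lam mu := by
  have hsub : mu.cells ⊆ lam.cells := YoungDiagram.cells_subset_iff.mpr h
  rw [WFun, WFun, WSkew, ← Finset.prod_sdiff hsub, ← Finset.prod_sdiff hsub, mul_div_mul_comm,
    mul_comm]

theorem WFun_ne_zero (q t : ℂˣ) (lam : YoungDiagram) : WFun q t lam ≠ 0 :=
  div_ne_zero (Finset.prod_ne_zero_iff.mpr fun _ _ => RatFunc.one_sub_C_mul_X_ne_zero_s17 _)
    (Finset.prod_ne_zero_iff.mpr fun _ _ => RatFunc.one_sub_C_mul_X_ne_zero_s17 _)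

theorem WSkew_eq_one_iff (q t : ℂˣ) (lam mu : YoungDiagram) :
    WSkew q t lam mu = 1 ↔
      ((skewContents lam mu).map (diagWeight q t)).map (·⁻¹) =
        (skewContents lam mu).map (diagWeight q t) := by
  have hnum (c : ℕ × ℕ) : (t : ℂ)⁻¹ * (q : ℂ) ^ (-2 * cellContent c) =
      (((diagWeight q t (cellContent c))⁻¹ : ℂˣ) : ℂ) := by
    simp [diagWeight, zpow_neg, Units.val_zpow_eq_zpow_val, mul_comm]
  have hden (c : ℕ × ℕ) : (t : ℂ) * (q : ℂ) ^ (2 * cellContent c) =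
      ((diagWeight q t (cellContent c) : ℂˣ) : ℂ) := by
    simp [diagWeight, Units.val_zpow_eq_zpow_val]
  simp only [WSkew, hnum, hden]
  rw [div_eq_one_iff_eq (Finset.prod_ne_zero_iff.mpr fun _ _ => RatFunc.one_sub_C_mul_X_ne_zero_s17 _),
    RatFunc.prod_one_sub_C_mul_X, RatFunc.prod_one_sub_C_mul_X,
    (RatFunc.algebraMap_injective ℂ).eq_iff, multiset_prod_one_sub_C_mul_X_inj]
  simp only [skewContents, Multiset.map_map, Function.comp_def]

/-- For `q` not a root of unity and `μ ⊆ λ`, `W(λ,q,t) = W(μ,q,t)` iff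
every diagonal of `λ/μ` is `(q,t)`-paired with a diagonal of `λ/μ` of the same length. -/
theorem WFun_eq_iff_skew_paired
    (q t : ℂˣ) (hq : ∀ k : ℕ, 0 < k → q ^ k ≠ 1)
    (mu lam : YoungDiagram) (h : mu ≤ lam) :
    WFun q t lam = WFun q t mu ↔
      ∀ i : ℤ, 0 < skewDiagCount lam mu i →
        ∃ j : ℤ, skewDiagCount lam mu j = skewDiagCount lam mu i ∧
          (t * q ^ (2 * i)) * (t * q ^ (2 * j)) = 1 := by
  have hq' : ¬IsOfFinOrder q := by simpa [isOfFinOrder_iff_pow_eq_one] using hq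
  rw [WFun_eq_mul_WSkew q t h, mul_eq_left₀ (WFun_ne_zero q t mu), WSkew_eq_one_iff,
    Multiset.map_inv_map_eq_map_iff (diagWeight_injective hq' t)]
  simp only [count_skewContents, diagWeight]
end
end

section
/- Let λ and μ be Young diagrams and let λ ⊓ μ denote their intersection (the infimum in the lattice of Young diagrams). Then for every integer i, the number of cells of λ ⊓ μ of content i equals min(m_λ(i), m_μ(i)). Consequently, the set of contents of cells of λ\(λ⊓μ) is disjoint from the set of contents of cells of μ\(λ⊓μ). -/
noncomputable section

/-!
The cells of content `d` lie on one diagonal, and since a Young diagram is a lower set, those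
belonging to `λ` form an initial segment of that diagonal, of length `m_λ(d)`. Intersecting
diagrams intersects these initial segments, whose lengths therefore combine by `min`. If both
`λ \ (λ ⊓ μ)` and `μ \ (λ ⊓ μ)` had a cell of content `d`, both `m_λ(d)` and `m_μ(d)` would
exceed `m_{λ⊓μ}(d) = min (m_λ(d)) (m_μ(d))`.
-/

def diagCell (d : ℤ) (k : ℕ) : ℕ × ℕ := ((-d).toNat + k, d.toNat + k)

lemma diagCell_injective (d : ℤ) : Function.Injective (diagCell d) := fun k l h => by
  simpa [diagCell] using congrArg Prod.fst h

def diagCellEmbedding (d : ℤ) : ℕ ↪ ℕ × ℕ := ⟨diagCell d, diagCell_injective d⟩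

lemma diagCell_monotone (d : ℤ) : Monotone (diagCell d) := fun k l h => by
  simp only [diagCell, Prod.mk_le_mk]
  omega

lemma cellContent_eq_iff_exists_diagCell {c : ℕ × ℕ} {d : ℤ} :
    cellContent c = d ↔ ∃ k, diagCell d k = c := by
  obtain ⟨i, j⟩ := c
  simp only [cellContent, diagCell, Prod.mk.injEq]
  constructor
  · intro h
    exact ⟨i - (-d).toNat, by omega, by omega⟩
  · rintro ⟨k, rfl, rfl⟩
    omega

lemma exists_diagCell_notMem (lam : YoungDiagram) (d : ℤ) : ∃ k, diagCell d k ∉ lam := by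
  refine ⟨lam.rowLen 0, fun h => ?_⟩
  rw [diagCell, YoungDiagram.mem_iff_lt_rowLen] at h
  have := lam.rowLen_anti 0 ((-d).toNat + lam.rowLen 0) (Nat.zero_le _)
  omega

lemma exists_diagCell_mem_iff_lt (lam : YoungDiagram) (d : ℤ) :
    ∃ n, ∀ k, diagCell d k ∈ lam ↔ k < n := by
  have hex := exists_diagCell_notMem lam d
  refine ⟨Nat.find hex, fun k => ⟨fun hk => ?_, fun hk => not_not.mp (Nat.find_min hex hk)⟩⟩
  by_contra hle
  exact Nat.find_spec hex
    (lam.isLowerSet (diagCell_monotone d (not_lt.mp hle)) hk)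

lemma filter_cellContent_eq_map_range {lam : YoungDiagram} {d : ℤ} {n : ℕ}
    (h : ∀ k, diagCell d k ∈ lam ↔ k < n) :
    lam.cells.filter (fun c => cellContent c = d) = (Finset.range n).map (diagCellEmbedding d) := by
  ext c
  simp only [Finset.mem_filter, YoungDiagram.mem_cells, Finset.mem_map, Finset.mem_range,
    cellContent_eq_iff_exists_diagCell, diagCellEmbedding, Function.Embedding.coeFn_mk]
  constructor
  · rintro ⟨hc, k, rfl⟩
    exact ⟨k, (h k).mp hc, rfl⟩
  · rintro ⟨k, hk, rfl⟩
    exact ⟨(h k).mpr hk, k, rfl⟩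

lemma diagCell_mem_iff_lt_diagCount (lam : YoungDiagram) (d : ℤ) (k : ℕ) :
    diagCell d k ∈ lam ↔ k < diagCount lam d := by
  obtain ⟨n, h⟩ := exists_diagCell_mem_iff_lt lam d
  rw [diagCount, filter_cellContent_eq_map_range h, Finset.card_map, Finset.card_range]
  exact h k

lemma diagCount_inf (lam mu : YoungDiagram) (d : ℤ) :
    diagCount (lam ⊓ mu) d = min (diagCount lam d) (diagCount mu d) :=
  eq_of_forall_lt_iff fun k => by
    rw [← diagCell_mem_iff_lt_diagCount, YoungDiagram.mem_inf, diagCell_mem_iff_lt_diagCount,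
      diagCell_mem_iff_lt_diagCount, lt_min_iff]

lemma skewDiagCount_of_le {lam mu : YoungDiagram} (h : mu ≤ lam) (d : ℤ) :
    skewDiagCount lam mu d = diagCount lam d - diagCount mu d := by
  rw [skewDiagCount, diagCount, diagCount,
    ← Finset.card_sdiff_of_subset (Finset.filter_subset_filter _ h)]
  congr 1
  ext c
  simp only [Finset.mem_filter, Finset.mem_sdiff]
  tauto

/-- For Young diagrams `λ, μ` with intersection `λ ⊓ μ`:
`m_{λ⊓μ}(i) = min (m_λ(i)) (m_μ(i))` for every `i`, and consequently the contents of
cells of `λ\(λ⊓μ)` and of `μ\(λ⊓μ)` form disjoint sets. -/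
theorem diagCount_inf_and_skew_contents_disjoint
    (lam mu : YoungDiagram) :
    (∀ i : ℤ, diagCount (lam ⊓ mu) i = min (diagCount lam i) (diagCount mu i)) ∧
    Disjoint {i : ℤ | 0 < skewDiagCount lam (lam ⊓ mu) i}
             {i : ℤ | 0 < skewDiagCount mu (lam ⊓ mu) i} := by
  refine ⟨diagCount_inf lam mu, Set.disjoint_left.mpr fun i hlam hmu => ?_⟩
  rw [Set.mem_ofPred_eq, skewDiagCount_of_le inf_le_left] at hlam
  rw [Set.mem_ofPred_eq, skewDiagCount_of_le inf_le_right] at hmu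
  have := diagCount_inf lam mu i
  omega
end
end
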